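/- Let {ψ_k^n} (n = 0,…,d; k = 0,…,d−1) be d+1 mutually unbiased orthonormal bases of C^d and P(n,k) = |ψ_k^n⟩⟨ψ_k^n|. Then every density operator ρ satisfies ρ = Σ_{n=0}^{d} Σ_{k=0}^{d−1} Tr(ρP(n,k))·P(n,k) − 𝟙. -/

import Mathlib

/-!
Vectorising `d × d` matrices, `X ↦ ∑ Tr(X P) P` becomes the frame operator
`F = ∑ |vec P⟩⟨vec P|` of the `d(d+1)` projectors, and the claim is `F = T` for the matrix `T` of
`X ↦ X + Tr X • 1`. Both are Hermitian, so `F = T` follows from `Tr(F - T)² = 0`, i.e. from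
`Tr F² = Tr(F T) = Tr T²`. Mutual unbiasedness gives `Tr(P P') ∈ {1, 0, 1/d}`, and with it each of
the three traces evaluates to `2d(d+1)`.
-/

open Matrix
open scoped ComplexOrder

def IsDensity {d : ℕ} (ρ : Matrix (Fin d) (Fin d) ℂ) : Prop :=
  ρ.PosSemidef ∧ ρ.trace = 1

namespace Matrix

variable {n M : Type*} [Fintype n] [Fintype M]

theorem IsHermitian.eq_of_trace_mul_eq {R : Type*} [CommRing R] [PartialOrder R] [StarRing R]
    [StarOrderedRing R] [NoZeroDivisors R] {A B : Matrix n n R} (hA : A.IsHermitian)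
    (hB : B.IsHermitian) (hAA : (A * A).trace = (A * B).trace)
    (hBB : (B * B).trace = (A * B).trace) : A = B := by
  rw [← sub_eq_zero, ← trace_conjTranspose_mul_self_eq_zero_iff, (hA.sub hB).eq]
  simp only [sub_mul, mul_sub, trace_sub, trace_mul_comm B A, hAA, hBB, sub_self]

section rankOneProj

def rankOneProj {ι : Type*} (ψ : ι → n → ℂ) (i : ι) : Matrix n n ℂ :=
  vecMulVec (ψ i) (star (ψ i))

variable {ι : Type*} (ψ : ι → n → ℂ)

theorem isHermitian_rankOneProj (i : ι) : (rankOneProj ψ i).IsHermitian :=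
  (posSemidef_vecMulVec_self_star _).isHermitian

theorem trace_rankOneProj (i : ι) : (rankOneProj ψ i).trace = star (ψ i) ⬝ᵥ ψ i := by
  rw [rankOneProj, trace_vecMulVec, dotProduct_comm]

theorem trace_rankOneProj_mul_rankOneProj (i j : ι) :
    (rankOneProj ψ i * rankOneProj ψ j).trace = ((‖star (ψ i) ⬝ᵥ ψ j‖ ^ 2 : ℝ) : ℂ) := by
  rw [rankOneProj, rankOneProj, vecMulVec_mul_vecMulVec, trace_vecMulVec, dotProduct_smul,
    smul_eq_mul, dotProduct_comm (ψ i), star_dotProduct (ψ j), Complex.star_def,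
    Complex.mul_conj, Complex.normSq_eq_norm_sq]

end rankOneProj

section Frame

variable {R : Type*} [CommSemiring R] [StarRing R]

def vecFrame (P : M → Matrix n n R) : Matrix (n × n) (n × n) R :=
  ∑ m, vecMulVec (vec (P m)) (star (vec (P m)))

theorem isHermitian_vecFrame (P : M → Matrix n n ℂ) : (vecFrame P).IsHermitian :=
  isSelfAdjoint_sum _ fun _ _ => (posSemidef_vecMulVec_self_star _).isHermitian

theorem vecFrame_mulVec_vec (P : M → Matrix n n R) (X : Matrix n n R) :
    vecFrame P *ᵥ vec X = vec (∑ m, ((P m)ᴴ * X).trace • P m) := by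
  simp only [vecFrame, sum_mulVec, vecMulVec_mulVec, star_vec_dotProduct_vec, op_smul_eq_smul,
    vec_sum, vec_smul]

theorem trace_vecFrame_mul (P : M → Matrix n n R) (B : Matrix (n × n) (n × n) R) :
    (vecFrame P * B).trace = ∑ m, star (vec (P m)) ⬝ᵥ (B *ᵥ vec (P m)) := by
  simp only [vecFrame, Finset.sum_mul, trace_sum, vecMulVec_mul, trace_vecMulVec]
  refine Finset.sum_congr rfl fun m _ => ?_
  rw [dotProduct_comm, dotProduct_mulVec]

theorem trace_vecFrame_mul_self (P : M → Matrix n n R) :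
    (vecFrame P * vecFrame P).trace =
      ∑ m, ∑ m', ((P m)ᴴ * P m').trace * ((P m')ᴴ * P m).trace := by
  simp only [trace_vecFrame_mul, vecFrame_mulVec_vec, star_vec_dotProduct_vec, Matrix.mul_sum,
    trace_sum, mul_smul_comm, trace_smul, smul_eq_mul, mul_comm]

variable [DecidableEq n]

/-- The matrix, in `vec` coordinates, of the map `X ↦ X + X.trace • 1`. -/
def vecIdAddTrace (n R : Type*) [Fintype n] [DecidableEq n] [CommSemiring R] [StarRing R] :
    Matrix (n × n) (n × n) R :=
  1 + vecMulVec (vec 1) (star (vec 1))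

theorem isHermitian_vecIdAddTrace : (vecIdAddTrace n ℂ).IsHermitian :=
  isHermitian_one.add (posSemidef_vecMulVec_self_star _).isHermitian

theorem vecIdAddTrace_mulVec_vec (X : Matrix n n R) :
    vecIdAddTrace n R *ᵥ vec X = vec (X + X.trace • 1) := by
  simp only [vecIdAddTrace, add_mulVec, one_mulVec, vecMulVec_mulVec, star_vec_dotProduct_vec,
    conjTranspose_one, one_mul, op_smul_eq_smul, vec_add, vec_smul]

theorem trace_vecFrame_mul_vecIdAddTrace (P : M → Matrix n n R) :
    (vecFrame P * vecIdAddTrace n R).trace =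
      ∑ m, (((P m)ᴴ * P m).trace + (P m)ᴴ.trace * (P m).trace) := by
  simp only [trace_vecFrame_mul, vecIdAddTrace_mulVec_vec, star_vec_dotProduct_vec,
    Matrix.mul_add, Matrix.mul_smul, trace_add, trace_smul, mul_one, smul_eq_mul, mul_comm]

theorem trace_vecIdAddTrace_mul_self :
    (vecIdAddTrace n R * vecIdAddTrace n R).trace =
      2 * Fintype.card n ^ 2 + 2 * Fintype.card n := by
  have hone : star (vec (1 : Matrix n n R)) ⬝ᵥ vec 1 = Fintype.card n := by
    rw [star_vec_dotProduct_vec, conjTranspose_one, one_mul, trace_one]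
  simp only [vecIdAddTrace, Matrix.mul_add, Matrix.add_mul, Matrix.mul_one, Matrix.one_mul,
    vecMulVec_mul_vecMulVec, trace_add, trace_vecMulVec, smul_dotProduct, dotProduct_comm (vec 1),
    trace_one, hone, Fintype.card_prod, smul_eq_mul]
  push_cast
  ring

theorem sum_trace_mul_smul_of_vecFrame_eq {P : M → Matrix n n R}
    (hP : vecFrame P = vecIdAddTrace n R) (X : Matrix n n R) :
    ∑ m, ((P m)ᴴ * X).trace • P m = X + X.trace • 1 := by
  rw [← vec_inj, ← vecFrame_mulVec_vec, hP, vecIdAddTrace_mulVec_vec]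

end Frame

end Matrix

def IsMUB {d : ℕ} (ψ : Fin (d + 1) → Fin d → Fin d → ℂ) : Prop :=
  ∀ n n' k k', ‖star (ψ n' k') ⬝ᵥ ψ n k‖ ^ 2 =
    if n = n' then (if k = k' then 1 else 0) else (d : ℝ)⁻¹

noncomputable def mubOverlap (d : ℕ) (m m' : Fin (d + 1) × Fin d) : ℂ :=
  if m.1 = m'.1 then (if m.2 = m'.2 then 1 else 0) else (d : ℂ)⁻¹

theorem mubOverlap_self (d : ℕ) (m : Fin (d + 1) × Fin d) : mubOverlap d m m = 1 := by
  simp [mubOverlap]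

theorem sum_sum_mubOverlap_sq (d : ℕ) :
    ∑ m, ∑ m', mubOverlap d m m' ^ 2 = 2 * d * (d + 1) := by
  simp only [mubOverlap, Fintype.sum_prod_type, apply_ite (· ^ 2), Finset.sum_ite_irrel]
  simp only [one_pow, Finset.sum_ite, Finset.filter_eq, Finset.mem_univ, ↓reduceIte,
    Finset.sum_const, Finset.card_singleton, one_smul, ← ne_eq, Finset.filter_ne,
    Finset.card_erase_of_mem, Finset.card_univ, Fintype.card_fin, nsmul_eq_mul, inv_pow, smul_add,
    add_tsub_cancel_right, mul_one, Nat.cast_add, Nat.cast_one]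
  rcases eq_or_ne (d : ℂ) 0 with hd | hd
  · simp [hd]
  · field_simp
    ring

namespace IsMUB

variable {d : ℕ} {ψ : Fin (d + 1) → Fin d → Fin d → ℂ}

theorem trace_rankOneProj_eq_one (hψ : IsMUB ψ) (m : Fin (d + 1) × Fin d) :
    (rankOneProj (Function.uncurry ψ) m).trace = 1 := by
  have hsq := hψ m.1 m.1 m.2 m.2
  rw [if_pos rfl, if_pos rfl, pow_eq_one_iff_of_nonneg (norm_nonneg _) two_ne_zero] at hsq
  rw [trace_rankOneProj, Complex.eq_coe_norm_of_nonneg (dotProduct_star_self_nonneg _)]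
  exact_mod_cast hsq

theorem trace_rankOneProj_mul (hψ : IsMUB ψ) (m m' : Fin (d + 1) × Fin d) :
    (rankOneProj (Function.uncurry ψ) m * rankOneProj (Function.uncurry ψ) m').trace =
      mubOverlap d m m' := by
  rw [trace_rankOneProj_mul_rankOneProj, Function.uncurry, Function.uncurry, hψ, mubOverlap]
  by_cases hn : m.1 = m'.1 <;> by_cases hk : m.2 = m'.2 <;> simp [hn, hk, eq_comm]

theorem trace_vecFrame_mul_self (hψ : IsMUB ψ) :
    (vecFrame (rankOneProj (Function.uncurry ψ)) *
      vecFrame (rankOneProj (Function.uncurry ψ))).trace = 2 * d * (d + 1) := by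
  rw [Matrix.trace_vecFrame_mul_self, ← sum_sum_mubOverlap_sq]
  refine Finset.sum_congr rfl fun m _ => Finset.sum_congr rfl fun m' _ => ?_
  rw [(isHermitian_rankOneProj _ m).eq, (isHermitian_rankOneProj _ m').eq,
    trace_mul_comm (rankOneProj _ m'), ← sq, hψ.trace_rankOneProj_mul]

theorem trace_vecFrame_mul_vecIdAddTrace (hψ : IsMUB ψ) :
    (vecFrame (rankOneProj (Function.uncurry ψ)) * vecIdAddTrace (Fin d) ℂ).trace =
      2 * d * (d + 1) := by
  simp only [Matrix.trace_vecFrame_mul_vecIdAddTrace, (isHermitian_rankOneProj _ _).eq,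
    hψ.trace_rankOneProj_mul, hψ.trace_rankOneProj_eq_one, mubOverlap_self]
  simp only [Finset.sum_const, Finset.card_univ, Fintype.card_prod, Fintype.card_fin,
    nsmul_eq_mul]
  push_cast
  ring

theorem vecFrame_eq (hψ : IsMUB ψ) :
    vecFrame (rankOneProj (Function.uncurry ψ)) = vecIdAddTrace (Fin d) ℂ := by
  refine (isHermitian_vecFrame _).eq_of_trace_mul_eq isHermitian_vecIdAddTrace ?_ ?_
  · rw [hψ.trace_vecFrame_mul_self, hψ.trace_vecFrame_mul_vecIdAddTrace]
  · rw [trace_vecIdAddTrace_mul_self, hψ.trace_vecFrame_mul_vecIdAddTrace, Fintype.card_fin]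
    ring

end IsMUB

theorem mub_reconstruction_general (d : ℕ)
    (ψ : Fin (d + 1) → Fin d → (Fin d → ℂ))
    (hmub : ∀ n n' k k', (‖∑ i, star (ψ n' k' i) * ψ n k i‖) ^ 2 =
      (if k = k' then 1 else 0) * (if n = n' then 1 else 0) +
        (1 / (d : ℝ)) * (1 - (if n = n' then 1 else 0)))
    (P : Fin (d + 1) → Fin d → Matrix (Fin d) (Fin d) ℂ)
    (hP : ∀ n k, P n k = vecMulVec (ψ n k) (star (ψ n k)))
    (ρ : Matrix (Fin d) (Fin d) ℂ) (hρ : IsDensity ρ) :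
    ρ = (∑ n, ∑ k, (ρ * P n k).trace • P n k) - 1 := by
  have hψ : IsMUB ψ := fun n n' k k' => by
    have h := hmub n n' k k'
    split_ifs at h ⊢ <;> simpa [dotProduct] using h
  have hreconstruct := sum_trace_mul_smul_of_vecFrame_eq hψ.vecFrame_eq ρ
  rw [Fintype.sum_prod_type] at hreconstruct
  obtain rfl : P = fun n k => rankOneProj (Function.uncurry ψ) (n, k) := funext₂ hP
  simp only [(isHermitian_rankOneProj _ _).eq] at hreconstruct
  simp_rw [trace_mul_comm ρ]
  rw [hreconstruct, hρ.2, one_smul, add_sub_cancel_right]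

/-- MUB reconstruction formula: given a full set of `d+1` mutually unbiased orthonormal
bases `ψ^n_k` of `ℂ^d` with projectors `P(n,k) = |ψ^n_k⟩⟨ψ^n_k|`, every density operator
satisfies `ρ = ∑_{n,k} Tr(ρ P(n,k)) • P(n,k) − 𝟙`. -/
theorem mub_reconstruction (d : ℕ) (hd : 1 ≤ d)
    (ψ : Fin (d + 1) → Fin d → (Fin d → ℂ))
    (hmub : ∀ n n' k k', (‖∑ i, star (ψ n' k' i) * ψ n k i‖) ^ 2 =
      (if k = k' then 1 else 0) * (if n = n' then 1 else 0) +
        (1 / (d : ℝ)) * (1 - (if n = n' then 1 else 0)))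
    (P : Fin (d + 1) → Fin d → Matrix (Fin d) (Fin d) ℂ)
    (hP : ∀ n k, P n k = vecMulVec (ψ n k) (star (ψ n k)))
    (ρ : Matrix (Fin d) (Fin d) ℂ) (hρ : IsDensity ρ) :
    ρ = (∑ n, ∑ k, (ρ * P n k).trace • P n k) - 1 :=
  mub_reconstruction_general d ψ hmub P hP ρ hρ
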